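/- arXiv:2107.12581 — 3 statements merged into one kernel-verified Lean document; each statement's English description precedes it below -/
import Mathlib

section
/- Let a_n satisfy the linear recurrence a_n = c + α a_{n−2} + β a_{n−3} for n ≥ 3 with α, β > 0, α + β = 1, c > 0, and arbitrary initial values a₀, a₁, a₂ ≥ 0. Then lim_{n→∞} a_n / n = c / (2α + 3β). -/
/-! Let `L = c / (2α + 3β)`. Since `α + β = 1` and `c = L (2α + 3β)`, the line `n ↦ L n` solves the
recurrence, so the deviation `a n - L n` solves the homogeneous recurrence
`b (n + 3) = α b (n + 1) + β b n`. Each term of that is a convex combination of earlier ones, so it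
stays bounded by its three initial values, and dividing by `n` kills it. -/

open Filter Topology

theorem norm_le_of_convex_recurrence {E : Type*} [SeminormedAddCommGroup E] [NormedSpace ℝ E]
    {b : ℕ → E} {α β M : ℝ} (hα : 0 ≤ α) (hβ : 0 ≤ β) (hαβ : α + β = 1)
    (hrec : ∀ n, b (n + 3) = α • b (n + 1) + β • b n)
    (h0 : ‖b 0‖ ≤ M) (h1 : ‖b 1‖ ≤ M) (h2 : ‖b 2‖ ≤ M) (n : ℕ) : ‖b n‖ ≤ M := by
  induction n using Nat.strong_induction_on with
  | _ n ih =>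
    match n, ih with
    | 0, _ => exact h0
    | 1, _ => exact h1
    | 2, _ => exact h2
    | m + 3, ih =>
      calc ‖b (m + 3)‖ = ‖α • b (m + 1) + β • b m‖ := by rw [hrec]
        _ ≤ α * ‖b (m + 1)‖ + β * ‖b m‖ := by
          refine (norm_add_le _ _).trans_eq ?_
          rw [norm_smul, norm_smul, Real.norm_of_nonneg hα, Real.norm_of_nonneg hβ]
        _ ≤ α * M + β * M := by gcongr <;> exact ih _ (by omega)
        _ = M := by rw [← add_mul, hαβ, one_mul]

theorem tendsto_div_natCast_of_abs_sub_mul_le {a : ℕ → ℝ} {L M : ℝ}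
    (h : ∀ n : ℕ, |a n - L * n| ≤ M) : Tendsto (fun n : ℕ => a n / n) atTop (𝓝 L) := by
  have hdev : Tendsto (fun n : ℕ => (a n - L * n) / n) atTop (𝓝 0) := by
    refine squeeze_zero_norm (fun n => ?_) (tendsto_const_div_atTop_nhds_zero_nat M)
    rw [norm_div, Real.norm_eq_abs, Real.norm_natCast]
    exact div_le_div_of_nonneg_right (h n) n.cast_nonneg
  refine (zero_add L ▸ hdev.add_const L).congr' ?_
  filter_upwards [eventually_ne_atTop 0] with n hn
  field_simp
  ring

theorem linear_recurrence_limit_general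
    (a : ℕ → ℝ) (c α β : ℝ)
    (hα : 0 < α) (hβ : 0 < β) (hαβ : α + β = 1)
    (hrec : ∀ n, 3 ≤ n → a n = c + α * a (n - 2) + β * a (n - 3)) :
    Filter.Tendsto (fun n : ℕ => a n / n) Filter.atTop (nhds (c / (2 * α + 3 * β))) := by
  set L := c / (2 * α + 3 * β)
  have hc : c = L * (2 * α + 3 * β) := (div_mul_cancel₀ c (by positivity)).symm
  have hdev : ∀ n : ℕ, a (n + 3) - L * ↑(n + 3) =
      α • (a (n + 1) - L * ↑(n + 1)) + β • (a n - L * n) := by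
    intro n
    rw [hrec (n + 3) (by omega), Nat.add_sub_cancel, show n + 3 - 2 = n + 1 by omega]
    push_cast
    simp only [smul_eq_mul]
    linear_combination hc + L * ((n : ℝ) + 3) * hαβ
  refine tendsto_div_natCast_of_abs_sub_mul_le (M := max (max |a 0| |a 1 - L|) |a 2 - L * 2|)
    fun n => norm_le_of_convex_recurrence (b := fun n => a n - L * n) hα.le hβ.le hαβ hdev
      ?_ ?_ ?_ n
  all_goals simp

/-- If `a_n = c + α a_{n−2} + β a_{n−3}` for `n ≥ 3`, with `α, β > 0`,
`α + β = 1`, `c > 0` and nonnegative initial values, then `a_n / n → c / (2α + 3β)`. -/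
theorem linear_recurrence_limit
    (a : ℕ → ℝ) (c α β : ℝ)
    (hc : 0 < c) (hα : 0 < α) (hβ : 0 < β) (hαβ : α + β = 1)
    (ha0 : 0 ≤ a 0) (ha1 : 0 ≤ a 1) (ha2 : 0 ≤ a 2)
    (hrec : ∀ n, 3 ≤ n → a n = c + α * a (n - 2) + β * a (n - 3)) :
    Filter.Tendsto (fun n : ℕ => a n / n) Filter.atTop (nhds (c / (2 * α + 3 * β))) :=
  linear_recurrence_limit_general a c α β hα hβ hαβ hrec
end

section
/- For the n × n grid graph with i.i.d. edge weights uniform on {1, 2}, the expected weight of a maximum-weight matching is at most (31/32)n² − (1/8)n − (1/8). -/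
/-- The `n × n` grid graph on `Fin n × Fin n`. -/
def gridGraph (n : ℕ) : SimpleGraph (Fin n × Fin n) :=
  SimpleGraph.fromRel (fun a b =>
    (a.1 = b.1 ∧ Nat.dist a.2.val b.2.val = 1) ∨ (a.2 = b.2 ∧ Nat.dist a.1.val b.1.val = 1))

/-- `M` is a matching of `G`: a set of edges of `G`, no two of which share a vertex. -/
def IsMatchingEdgeSet {V : Type*} (G : SimpleGraph V) (M : Finset (Sym2 V)) : Prop :=
  (∀ e ∈ M, e ∈ G.edgeSet) ∧
    ∀ e ∈ M, ∀ f ∈ M, e ≠ f → ∀ x : V, ¬(x ∈ e ∧ x ∈ f)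

/-- The maximum total weight over all matchings of `G`, for edge weights `w`. -/
noncomputable def maxMatchingWeight {V : Type*} [Fintype V]
    (G : SimpleGraph V) (w : Sym2 V → ℝ) : ℝ :=
  sSup {x : ℝ | ∃ M : Finset (Sym2 V), IsMatchingEdgeSet G M ∧ x = ∑ e ∈ M, w e}

/-!
Whatever the weights, a matching uses at most one edge at each vertex, so its weight is at most
half the sum over vertices of the largest weight of an incident edge. A vertex of degree `d` sees
only edges of weight `1` with probability `2⁻ᵈ`, so that largest weight has expectation `2 - 2⁻ᵈ`.
The grid is the box product of two paths, hence `2^(-deg (i, j)) = 2^(-deg i) * 2^(-deg j)`, and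
summing `2^(-deg i)` over a path on `n` vertices gives `(n + 2) / 4`. The expected maximum is
therefore at most `(2n² - ((n + 2) / 4)²) / 2 = (31/32)n² - n/8 - 1/8`.
-/

open Finset SimpleGraph

theorem sum_ite_mem_sym2 {V : Type*} [Fintype V] [DecidableEq V] {e : Sym2 V} (he : ¬e.IsDiag)
    (c : ℝ) : ∑ v, (if v ∈ e then c else 0) = 2 * c := by
  induction e using Sym2.ind with
  | _ x y =>
    have hxy : x ≠ y := by simpa using he
    rw [← sum_filter, show ({v | v ∈ s(x, y)} : Finset V) = {x, y} by ext; simp, sum_pair hxy]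
    ring

theorem maxMatchingWeight_le_half_sum {V : Type*} [Fintype V] (G : SimpleGraph V)
    (w : Sym2 V → ℝ) (g : V → ℝ) (hg : ∀ v, 0 ≤ g v) (hwg : ∀ e ∈ G.edgeSet, ∀ v ∈ e, w e ≤ g v) :
    maxMatchingWeight G w ≤ 1 / 2 * ∑ v, g v := by
  classical
  refine Real.sSup_le ?_ (by have := sum_nonneg fun v (_ : v ∈ univ) => hg v; positivity)
  rintro _ ⟨M, ⟨hMG, hMdisj⟩, rfl⟩
  have hvertex (v : V) : ∑ e ∈ M, (if v ∈ e then w e else 0) ≤ g v := by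
    rw [← sum_filter]
    obtain hempty | ⟨e, he⟩ := ({e ∈ M | v ∈ e}).eq_empty_or_nonempty
    · simpa [hempty] using hg v
    · obtain ⟨heM, hve⟩ := mem_filter.mp he
      have hsingle : {e ∈ M | v ∈ e} = {e} := eq_singleton_iff_unique_mem.mpr ⟨he, fun f hf => by
        obtain ⟨hfM, hvf⟩ := mem_filter.mp hf
        by_contra hfe
        exact hMdisj f hfM e heM hfe v ⟨hvf, hve⟩⟩
      rw [hsingle, sum_singleton]
      exact hwg e (hMG e heM) v hve
  calc ∑ e ∈ M, w e = 1 / 2 * ∑ e ∈ M, 2 * w e := by rw [← mul_sum]; ring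
    _ = 1 / 2 * ∑ v, ∑ e ∈ M, (if v ∈ e then w e else 0) := by
        rw [sum_comm, sum_congr rfl fun e he =>
          (sum_ite_mem_sym2 (G.not_isDiag_of_mem_edgeSet (hMG e he)) (w e)).symm]
    _ ≤ 1 / 2 * ∑ v, g v := by gcongr with v; exact hvertex v

theorem sum_half_pow_card_mul_ite_exists {α : Type*} [Fintype α] [DecidableEq α] (s : Finset α) :
    ∑ f : α → Bool, (1 / 2 : ℝ) ^ Fintype.card α * (if ∃ a ∈ s, f a then 2 else 1) =
      2 - (1 / 2) ^ #s := by
  have hsplit (f : α → Bool) : (if ∃ a ∈ s, f a then (2 : ℝ) else 1) =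
      2 - ∏ a, (if a ∈ s ∧ f a then 0 else 1) := by
    split_ifs with h
    · obtain ⟨a, ha, hfa⟩ := h
      rw [Finset.prod_eq_zero (mem_univ a) (by simp [ha, hfa])]
      norm_num
    · rw [prod_eq_one fun a _ => if_neg fun hfa => h ⟨a, hfa⟩]
      norm_num
  have hindep : ∑ f : α → Bool, (1 / 2 : ℝ) ^ Fintype.card α *
      ∏ a, (if a ∈ s ∧ f a then 0 else 1) = (1 / 2) ^ #s :=
    calc _ = ∑ f : α → Bool, ∏ a, (1 / 2 * if a ∈ s ∧ f a then (0 : ℝ) else 1) := by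
          simp only [prod_mul_distrib, prod_const, card_univ]
      _ = ∏ a, ∑ b : Bool, (1 / 2 * if a ∈ s ∧ b then (0 : ℝ) else 1) :=
          (Fintype.prod_sum fun a (b : Bool) => 1 / 2 * if a ∈ s ∧ b then (0 : ℝ) else 1).symm
      _ = ∏ a, (if a ∈ s then 1 / 2 else 1) := by
          refine prod_congr rfl fun a _ => ?_
          by_cases ha : a ∈ s <;> simp [ha]
      _ = (1 / 2) ^ #s := by rw [prod_ite_mem, univ_inter, prod_const]
  simp_rw [hsplit, mul_sub, sum_sub_distrib, hindep, sum_const, card_univ, Fintype.card_fun,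
    Fintype.card_bool, nsmul_eq_mul, ← mul_assoc]
  push_cast
  rw [← mul_pow]
  norm_num

theorem card_filter_mem_eq_degree {V : Type*} [Fintype V] [DecidableEq V] (G : SimpleGraph V)
    [DecidableRel G.Adj] (v : V) : #{e : G.edgeFinset | v ∈ (e : Sym2 V)} = G.degree v := by
  rw [← card_incidenceFinset_eq_degree]
  refine card_bij (fun e _ => (e : Sym2 V)) ?_ (fun _ _ _ _ => Subtype.ext) ?_
  · intro e he
    simp only [mem_filter, mem_univ, true_and] at he
    exact (mem_incidenceFinset _ _ _).mpr ⟨mem_edgeFinset.mp e.2, he⟩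
  · intro e he
    rw [mem_incidenceFinset] at he
    exact ⟨⟨e, mem_edgeFinset.mpr he.1⟩, by simpa using he.2, rfl⟩

theorem sum_half_pow_mul_maxMatchingWeight_le {V : Type*} [Fintype V] [DecidableEq V]
    (G : SimpleGraph V) [DecidableRel G.Adj] :
    ∑ f : G.edgeFinset → Bool, (1 / 2 : ℝ) ^ #G.edgeFinset *
        maxMatchingWeight G (fun e => if h : e ∈ G.edgeFinset then
          (if f ⟨e, h⟩ then 2 else 1) else 0) ≤
      1 / 2 * ∑ v, (2 - (1 / 2 : ℝ) ^ G.degree v) := by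
  set incident : V → Finset G.edgeFinset := fun v => {e | v ∈ (e : Sym2 V)}
  have hmatch (f : G.edgeFinset → Bool) :
      maxMatchingWeight G (fun e => if h : e ∈ G.edgeFinset then
          (if f ⟨e, h⟩ then 2 else 1) else 0) ≤
        1 / 2 * ∑ v, (if ∃ e ∈ incident v, f e then (2 : ℝ) else 1) := by
    refine maxMatchingWeight_le_half_sum G _ _ (fun v => by split_ifs <;> norm_num) ?_
    intro e he v hv
    have he' : e ∈ G.edgeFinset := mem_edgeFinset.mpr he
    rw [dif_pos he']
    by_cases hf : f ⟨e, he'⟩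
    · rw [if_pos hf, if_pos ⟨⟨e, he'⟩, by simpa [incident] using hv, hf⟩]
    · rw [if_neg hf]
      split_ifs <;> norm_num
  calc _ ≤ ∑ f : G.edgeFinset → Bool, (1 / 2 : ℝ) ^ #G.edgeFinset *
        (1 / 2 * ∑ v, (if ∃ e ∈ incident v, f e then (2 : ℝ) else 1)) := by
        gcongr with f
        exact hmatch f
    _ = 1 / 2 * ∑ v, ∑ f : G.edgeFinset → Bool, (1 / 2 : ℝ) ^ Fintype.card G.edgeFinset *
        (if ∃ e ∈ incident v, f e then (2 : ℝ) else 1) := by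
        simp_rw [Fintype.card_coe, mul_sum, sum_comm (s := univ (α := G.edgeFinset → Bool))]
        ring_nf
    _ = 1 / 2 * ∑ v, (2 - (1 / 2 : ℝ) ^ G.degree v) := by
        simp_rw [sum_half_pow_card_mul_ite_exists, incident, card_filter_mem_eq_degree]

theorem gridGraph_eq_boxProd (n : ℕ) : gridGraph n = pathGraph n □ pathGraph n := by
  ext a b
  simp only [gridGraph, fromRel_adj, boxProd_adj, pathGraph_adj, Nat.dist, ne_eq, Prod.ext_iff,
    Fin.ext_iff]
  omega

theorem degree_pathGraph_le {n : ℕ} [DecidableRel (pathGraph n).Adj] (i : Fin n) :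
    (pathGraph n).degree i ≤ (if i.val = 0 then 0 else 1) + (if i.val = n - 1 then 0 else 1) := by
  have hsub : (pathGraph n).neighborFinset i ⊆
      ({j | j.val + 1 = i.val} : Finset (Fin n)) ∪ ({j | i.val + 1 = j.val} : Finset (Fin n)) := by
    intro j hj
    simp only [mem_neighborFinset, pathGraph_adj] at hj
    simp only [mem_union, mem_filter, mem_univ, true_and]
    omega
  rw [← card_neighborFinset_eq_degree]
  refine (card_le_card hsub).trans ((card_union_le _ _).trans (add_le_add ?_ ?_))
  · split_ifs with h
    · simpa using fun j => by omega
    · exact card_le_one.mpr fun a ha b hb => by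
        simp only [mem_filter, mem_univ, true_and] at ha hb
        exact Fin.ext (by omega)
  · split_ifs with h
    · simpa using fun j => by have := j.isLt; omega
    · exact card_le_one.mpr fun a ha b hb => by
        simp only [mem_filter, mem_univ, true_and] at ha hb
        exact Fin.ext (by omega)

theorem div_four_le_half_pow_degree_pathGraph {n : ℕ} [DecidableRel (pathGraph n).Adj]
    (i : Fin n) :
    (1 + (if i.val = 0 then 1 else 0) + (if i.val = n - 1 then 1 else 0)) / 4 ≤
      (1 / 2 : ℝ) ^ (pathGraph n).degree i := by
  refine le_trans ?_ (pow_le_pow_of_le_one (by norm_num) (by norm_num) (degree_pathGraph_le i))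
  split_ifs <;> norm_num

theorem le_sum_half_pow_degree_pathGraph {n : ℕ} [DecidableRel (pathGraph n).Adj] (hn : 0 < n) :
    (n + 2) / 4 ≤ ∑ i, (1 / 2 : ℝ) ^ (pathGraph n).degree i := by
  refine le_trans (le_of_eq ?_) (sum_le_sum fun i _ => div_four_le_half_pow_degree_pathGraph i)
  rw [Fin.sum_univ_eq_sum_range
      (fun k => (1 + (if k = 0 then 1 else 0) + (if k = n - 1 then 1 else 0) : ℝ) / 4),
    ← sum_div, sum_add_distrib, sum_add_distrib, sum_const, card_range, sum_ite_eq', sum_ite_eq',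
    if_pos (mem_range.mpr hn), if_pos (mem_range.mpr (by omega)), nsmul_one]
  ring

theorem le_sum_half_pow_degree_gridGraph {n : ℕ} [DecidableRel (gridGraph n).Adj] (hn : 0 < n) :
    ((n + 2) / 4) ^ 2 ≤ ∑ v, (1 / 2 : ℝ) ^ (gridGraph n).degree v := by
  classical
  have hdeg (v : Fin n × Fin n) :
      (gridGraph n).degree v = (pathGraph n).degree v.1 + (pathGraph n).degree v.2 := by
    convert degree_boxProd (G := pathGraph n) (H := pathGraph n) v using 2
    exact gridGraph_eq_boxProd n
  have hpath := le_sum_half_pow_degree_pathGraph (n := n) hn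
  calc ((n + 2) / 4 : ℝ) ^ 2 ≤ (∑ i, (1 / 2 : ℝ) ^ (pathGraph n).degree i) ^ 2 := by
        gcongr
    _ = ∑ v, (1 / 2 : ℝ) ^ (gridGraph n).degree v := by
        simp_rw [sq, sum_mul_sum, ← Fintype.sum_prod_type', hdeg, pow_add]

open scoped Classical in
/-- For the `n × n` grid graph with i.i.d. edge weights uniform on `{1, 2}`,
the expected weight of a maximum-weight matching is at most `(31/32)n² − (1/8)n − 1/8`.
The expectation is written as an average over all assignments of weights to the edges. -/
theorem grid_expected_optimal_matching_bound (n : ℕ) (hn : 2 ≤ n) :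
    ∑ f : ↥(gridGraph n).edgeFinset → Bool,
        ((1 : ℝ) / 2) ^ ((gridGraph n).edgeFinset.card) *
          maxMatchingWeight (gridGraph n)
            (fun e => if h : e ∈ (gridGraph n).edgeFinset then
                (if f ⟨e, h⟩ then 2 else 1) else 0)
      ≤ (31 / 32) * (n : ℝ) ^ 2 - (1 / 8) * n - 1 / 8 := by
  have hdeg := le_sum_half_pow_degree_gridGraph (n := n) (by omega)
  calc _ ≤ 1 / 2 * ∑ v, (2 - (1 / 2 : ℝ) ^ (gridGraph n).degree v) :=
        sum_half_pow_mul_maxMatchingWeight_le _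
    _ = n ^ 2 - 1 / 2 * ∑ v, (1 / 2 : ℝ) ^ (gridGraph n).degree v := by
        rw [sum_sub_distrib, sum_const, card_univ, Fintype.card_prod, Fintype.card_fin,
          nsmul_eq_mul]
        push_cast
        ring
    _ ≤ _ := by linarith
end

section
/- For fixed d > 0 and p_K ∈ (0,1), the function F(y) = e^{−p_K d} Σ_{i=0}^∞ (p_K d)^i (1 − (1−y)^{i+1}) / ((i+1)! · y) is strictly decreasing in y on (0,1), satisfies lim_{y→0⁺} F(y) = 1, and F(1) = (1 − e^{−p_K d})/(p_K d) < 1; hence the equation y = F(y) has a unique solution in (0,1). -/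
/-!
Each term of the series splits into a difference of terms of the series of `e^{pd} - 1` and
`e^{pd(1-y)} - 1`, so `F(y) = g(p d y)` with `g(t) = (1 - e^{-t}) / t`, the average of `e^{-s}`
over `[0, t]`.
Since `e^{-s}` decreases, so does its running average `g`, and `g(t) → 1` as `t → 0⁺`.
Hence `y ↦ F(y) - y` is continuous and strictly decreasing on `(0, 1]`, positive near `0`
and negative at `1`, so it has exactly one zero in `(0, 1)`.
-/

/-- The function `F(y) = e^{−p d} Σ_{i=0}^∞ (p d)^i (1 − (1−y)^{i+1}) / ((i+1)! y)`
arising in the fixed-point equation for greedy matching on Poisson Galton–Watson trees. -/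
noncomputable def proposalFn (d p y : ℝ) : ℝ :=
  Real.exp (-(p * d)) *
    ∑' i : ℕ, (p * d) ^ i * (1 - (1 - y) ^ (i + 1)) / ((Nat.factorial (i + 1) : ℝ) * y)

open Real Set Filter Topology

noncomputable def oneSubExpNegDiv (t : ℝ) : ℝ := (1 - exp (-t)) / t

theorem hasSum_pow_succ_div_factorial (t : ℝ) :
    HasSum (fun i : ℕ => t ^ (i + 1) / ((i + 1).factorial : ℝ)) (exp t - 1) := by
  have h := NormedSpace.expSeries_div_hasSum_exp t
  rw [← Real.exp_eq_exp_ℝ] at h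
  simpa using (hasSum_nat_add_iff' 1).mpr h

theorem hasSum_proposalFn_series {c y : ℝ} (hc : c ≠ 0) (hy : y ≠ 0) :
    HasSum (fun i : ℕ => c ^ i * (1 - (1 - y) ^ (i + 1)) / (((i + 1).factorial : ℝ) * y))
      ((exp c - exp (c * (1 - y))) / (c * y)) := by
  have h := ((hasSum_pow_succ_div_factorial c).sub
    (hasSum_pow_succ_div_factorial (c * (1 - y)))).div_const (c * y)
  rw [sub_sub_sub_cancel_right] at h
  refine (funext fun i => ?_ : (fun i : ℕ => _) = _) ▸ h
  have : ((i + 1).factorial : ℝ) ≠ 0 := by positivity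
  rw [mul_pow, pow_succ c i]
  field_simp

theorem proposalFn_eq_oneSubExpNegDiv {d p y : ℝ} (hc : p * d ≠ 0) (hy : y ≠ 0) :
    proposalFn d p y = oneSubExpNegDiv (p * d * y) := by
  rw [proposalFn, (hasSum_proposalFn_series hc hy).tsum_eq, oneSubExpNegDiv, mul_div_assoc',
    mul_sub, ← exp_add, ← exp_add, neg_add_cancel, exp_zero]
  congr 3
  ring

theorem hasDerivAt_one_sub_exp_neg (t : ℝ) :
    HasDerivAt (fun s => 1 - exp (-s)) (exp (-t)) t := by
  simpa using ((hasDerivAt_neg t).exp).const_sub 1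

theorem oneSubExpNegDiv_strictAntiOn : StrictAntiOn oneSubExpNegDiv (Ioi 0) := by
  refine strictAntiOn_of_deriv_neg (convex_Ioi 0)
    (ContinuousOn.div (by fun_prop) continuousOn_id fun t ht => ne_of_gt ht) fun t ht => ?_
  rw [interior_Ioi] at ht
  have ht : 0 < t := ht
  have hderiv : HasDerivAt oneSubExpNegDiv _ t :=
    (hasDerivAt_one_sub_exp_neg t).div (hasDerivAt_id t) ht.ne'
  rw [hderiv.deriv]
  refine div_neg_of_neg_of_pos ?_ (by positivity)
  have h : (t + 1) * exp (-t) < 1 := by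
    rw [exp_neg, ← div_eq_mul_inv, div_lt_one (exp_pos t)]
    exact add_one_lt_exp ht.ne'
  linarith

theorem tendsto_oneSubExpNegDiv_nhdsGT_zero :
    Tendsto oneSubExpNegDiv (𝓝[>] 0) (𝓝 1) := by
  have h := hasDerivAt_iff_tendsto_slope.mp (hasDerivAt_one_sub_exp_neg 0)
  have hslope : slope (fun s => 1 - exp (-s)) 0 = oneSubExpNegDiv := by
    ext t
    simp [slope_def_field, oneSubExpNegDiv]
  rw [hslope, neg_zero, exp_zero] at h
  exact h.mono_left (nhdsWithin_mono 0 fun t ht => ne_of_gt ht)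

theorem oneSubExpNegDiv_lt_one {t : ℝ} (ht : 0 < t) : oneSubExpNegDiv t < 1 := by
  rw [oneSubExpNegDiv, div_lt_one ht]
  linarith [add_one_lt_exp (neg_ne_zero.mpr ht.ne')]

theorem AntitoneOn.eq_of_isFixedPt {α : Type*} [LinearOrder α] {f : α → α} {s : Set α}
    (hanti : AntitoneOn f s) {y z : α} (hy : y ∈ s) (hz : z ∈ s) (hfy : Function.IsFixedPt f y)
    (hfz : Function.IsFixedPt f z) : y = z := by
  rcases le_total y z with hyz | hzy
  · exact le_antisymm hyz (hfy.eq ▸ hfz.eq ▸ hanti hy hz hyz)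
  · exact le_antisymm (hfy.eq ▸ hfz.eq ▸ hanti hz hy hzy) hzy

theorem exists_isFixedPt_mem_Ioo_of_tendsto_nhdsGT {f : ℝ → ℝ} {a b l : ℝ} (hab : a < b)
    (hcont : ContinuousOn f (Ioc a b)) (hlim : Tendsto f (𝓝[>] a) (𝓝 l)) (hal : a < l)
    (hb : f b < b) : ∃ y ∈ Ioo a b, Function.IsFixedPt f y := by
  have hsub : Tendsto (fun y => f y - y) (𝓝[>] a) (𝓝 (l - a)) :=
    hlim.sub (tendsto_nhdsWithin_of_tendsto_nhds tendsto_id)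
  obtain ⟨a', ha'_pos, ha'_mem⟩ :=
    ((hsub.eventually (eventually_gt_nhds (sub_pos.mpr hal))).and (Ioo_mem_nhdsGT hab)).exists
  obtain ⟨y, hy, hfy⟩ := intermediate_value_Ioo' ha'_mem.2.le
    ((hcont.mono (Icc_subset_Ioc ha'_mem.1 le_rfl)).sub continuousOn_id)
    ⟨sub_neg.mpr hb, ha'_pos⟩
  exact ⟨y, ⟨ha'_mem.1.trans hy.1, hy.2⟩, sub_eq_zero.mp hfy⟩

section

variable {d p : ℝ} (hc : 0 < p * d)
include hc

theorem proposalFn_strictAntiOn : StrictAntiOn (proposalFn d p) (Ioo 0 1) := by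
  intro x hx y hy hxy
  rw [proposalFn_eq_oneSubExpNegDiv hc.ne' hx.1.ne', proposalFn_eq_oneSubExpNegDiv hc.ne' hy.1.ne']
  exact oneSubExpNegDiv_strictAntiOn (mul_pos hc hx.1) (mul_pos hc hy.1)
    (mul_lt_mul_of_pos_left hxy hc)

theorem tendsto_proposalFn_nhdsGT_zero : Tendsto (proposalFn d p) (𝓝[>] 0) (𝓝 1) := by
  have hmul : Tendsto (p * d * ·) (𝓝[>] 0) (𝓝[>] 0) :=
    tendsto_comap.mono_left (comap_mulLeft_nhdsGT_zero hc).ge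
  refine (tendsto_oneSubExpNegDiv_nhdsGT_zero.comp hmul).congr' ?_
  filter_upwards [self_mem_nhdsWithin] with y hy
  exact (proposalFn_eq_oneSubExpNegDiv hc.ne' (ne_of_gt hy)).symm

theorem proposalFn_continuousOn : ContinuousOn (proposalFn d p) (Ioi 0) := by
  refine ContinuousOn.congr (f := fun y => oneSubExpNegDiv (p * d * y)) ?_
    fun y hy => proposalFn_eq_oneSubExpNegDiv hc.ne' (ne_of_gt hy)
  exact ContinuousOn.div (by fun_prop) (by fun_prop) fun y hy => (mul_pos hc hy).ne'

theorem proposalFn_one : proposalFn d p 1 = (1 - exp (-(p * d))) / (p * d) := by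
  rw [proposalFn_eq_oneSubExpNegDiv hc.ne' one_ne_zero, mul_one, oneSubExpNegDiv]

theorem proposalFn_one_lt_one : proposalFn d p 1 < 1 := by
  rw [proposalFn_eq_oneSubExpNegDiv hc.ne' one_ne_zero, mul_one]
  exact oneSubExpNegDiv_lt_one hc

end

theorem fixed_point_unique_general
    (d p : ℝ) (hd : 0 < d) (hp0 : 0 < p) :
    StrictAntiOn (proposalFn d p) (Set.Ioo 0 1) ∧
    Filter.Tendsto (proposalFn d p) (nhdsWithin 0 (Set.Ioi 0)) (nhds 1) ∧
    proposalFn d p 1 = (1 - Real.exp (-(p * d))) / (p * d) ∧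
    proposalFn d p 1 < 1 ∧
    ∃! y : ℝ, y ∈ Set.Ioo (0 : ℝ) 1 ∧ proposalFn d p y = y := by
  have hc : 0 < p * d := mul_pos hp0 hd
  have hanti := proposalFn_strictAntiOn hc
  have hlim := tendsto_proposalFn_nhdsGT_zero hc
  obtain ⟨y, hy, hfy⟩ := exists_isFixedPt_mem_Ioo_of_tendsto_nhdsGT zero_lt_one
    ((proposalFn_continuousOn hc).mono Ioc_subset_Ioi_self) hlim zero_lt_one
    (proposalFn_one_lt_one hc)
  exact ⟨hanti, hlim, proposalFn_one hc, proposalFn_one_lt_one hc, y, ⟨hy, hfy⟩,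
    fun z ⟨hz, hfz⟩ => hanti.antitoneOn.eq_of_isFixedPt hz hy hfz hfy⟩

/-- For fixed `d > 0` and `p_K ∈ (0,1)`, the function `F` is strictly
decreasing on `(0,1)`, satisfies `lim_{y→0⁺} F(y) = 1` and
`F(1) = (1 − e^{−p_K d})/(p_K d) < 1`; hence `y = F(y)` has a unique solution in `(0,1)`. -/
theorem fixed_point_unique
    (d p : ℝ) (hd : 0 < d) (hp0 : 0 < p) (hp1 : p < 1) :
    StrictAntiOn (proposalFn d p) (Set.Ioo 0 1) ∧
    Filter.Tendsto (proposalFn d p) (nhdsWithin 0 (Set.Ioi 0)) (nhds 1) ∧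
    proposalFn d p 1 = (1 - Real.exp (-(p * d))) / (p * d) ∧
    proposalFn d p 1 < 1 ∧
    ∃! y : ℝ, y ∈ Set.Ioo (0 : ℝ) 1 ∧ proposalFn d p y = y :=
  fixed_point_unique_general d p hd hp0
end
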